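/- arXiv:2211.10106 — 8 statements merged into one kernel-verified Lean document; each statement's English description precedes it below -/
import Mathlib

section
/- Every quasicontinuous dcpo has weak one-step closure: for every subset A of a quasicontinuous dcpo L, the Scott closure of A equals A'' = {x ∈ L : there exists a directed subset D of ↓A with x ≤ sup D}. -/
open Set

section OrderDefs

variable {L : Type*} [Preorder L]

/-- Downward closure `↓A`. -/
def dw (A : Set L) : Set L := {x | ∃ a ∈ A, x ≤ a}

/-- Upward closure `↑A`. -/
def up (A : Set L) : Set L := {x | ∃ a ∈ A, a ≤ x}

/-- Scott closure of a set. -/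
def scottCl (A : Set L) : Set L := @closure L (Topology.scott L Set.univ) A

/-- `A' = {x : ∃ directed D ⊆ ↓A with x = sup D}`. -/
def oneStep (A : Set L) : Set L :=
  {x | ∃ D : Set L, D ⊆ dw A ∧ D.Nonempty ∧ DirectedOn (· ≤ ·) D ∧ IsLUB D x}

/-- `A'' = {x : ∃ directed D ⊆ ↓A with x ≤ sup D}`. -/
def weakOneStep (A : Set L) : Set L :=
  {x | ∃ D : Set L, D ⊆ dw A ∧ D.Nonempty ∧ DirectedOn (· ≤ ·) D ∧ ∃ y, IsLUB D y ∧ x ≤ y}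

/-- A poset has one-step closure if `cl(A) = A'` for all `A`. -/
def HasOneStepClosure (L : Type*) [Preorder L] : Prop :=
  ∀ A : Set L, scottCl A = oneStep A

/-- A poset has weak one-step closure if `cl(A) = A''` for all `A`. -/
def HasWeakOneStepClosure (L : Type*) [Preorder L] : Prop :=
  ∀ A : Set L, scottCl A = weakOneStep A

/-- Meet continuity: `x ≤ sup D` implies `x ∈ cl(↓D ∩ ↓x)`. -/
def MeetContinuous (L : Type*) [Preorder L] : Prop :=
  ∀ x : L, ∀ D : Set L, D.Nonempty → DirectedOn (· ≤ ·) D → ∀ s, IsLUB D s → x ≤ s →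
    x ∈ scottCl (dw D ∩ dw ({x} : Set L))

/-- The way-below relation `x ≪ y`. -/
def wayBelow (x y : L) : Prop :=
  ∀ D : Set L, D.Nonempty → DirectedOn (· ≤ ·) D → ∀ s, IsLUB D s → y ≤ s →
    (D ∩ up ({x} : Set L)).Nonempty

/-- The weakly way-below relation `x ≪_w y`. -/
def weaklyWayBelow (x y : L) : Prop :=
  ∀ D : Set L, D.Nonempty → DirectedOn (· ≤ ·) D → IsLUB D y →
    (D ∩ up ({x} : Set L)).Nonempty

/-- A continuous poset: each `⇓x` is directed with supremum `x`. -/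
def ContinuousPoset (L : Type*) [Preorder L] : Prop :=
  ∀ x : L, {y | wayBelow y x}.Nonempty ∧ DirectedOn (· ≤ ·) {y | wayBelow y x} ∧
    IsLUB {y | wayBelow y x} x

/-- An exact poset: each `⇓_w x` is directed with supremum `x`. -/
def ExactPoset (L : Type*) [Preorder L] : Prop :=
  ∀ x : L, {y | weaklyWayBelow y x}.Nonempty ∧ DirectedOn (· ≤ ·) {y | weaklyWayBelow y x} ∧
    IsLUB {y | weaklyWayBelow y x} x

/-- `F ≪ x` for a set `F`: every directed `D` with `sup D ≥ x` meets `↑F`. -/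
def finWayBelow (F : Set L) (x : L) : Prop :=
  ∀ D : Set L, D.Nonempty → DirectedOn (· ≤ ·) D → ∀ s, IsLUB D s → x ≤ s →
    (D ∩ up F).Nonempty

/-- A quasicontinuous poset: each `fin(x)` is a directed family (Smyth preorder)
with `↑x = ⋂_{F ∈ fin(x)} ↑F`. -/
def QuasicontinuousPoset (L : Type*) [Preorder L] : Prop :=
  ∀ x : L, {F : Set L | F.Finite ∧ finWayBelow F x}.Nonempty ∧
    DirectedOn (fun F G => up G ⊆ up F) {F : Set L | F.Finite ∧ finWayBelow F x} ∧
    up ({x} : Set L) = ⋂ F ∈ {F : Set L | F.Finite ∧ finWayBelow F x}, up F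

/-- A dcpo: every (nonempty) directed subset has a least upper bound. -/
def IsDcpo (L : Type*) [Preorder L] : Prop :=
  ∀ D : Set L, D.Nonempty → DirectedOn (· ≤ ·) D → ∃ x, IsLUB D x

end OrderDefs

/-!
`A''` contains `A`, is a lower set and lies in the Scott closure of `A`, so it suffices that `A''`
is closed under directed suprema. Let `E ⊆ A''` be directed with supremum `s`. Every finite `H`
with `H ≪ G ≪ s` for a finite `G` meets `↓A`: `G ≪ s` puts some `e ∈ E` above a point `g ∈ G`, and
`H ≪ g ≤ e ≤ sup D` for a directed `D ⊆ ↓A`. By quasicontinuity these `H` form a Smyth-directed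
family with `⋂ ↑H = ↑s`, so Rudin's lemma applied to the traces `H ∩ ↓A` yields a directed
`D ⊆ ↓A` whose supremum lies in every `↑H`, hence above `s`.
-/

section Rudin

variable {L : Type*} [Preorder L]

lemma subset_up (A : Set L) : A ⊆ up A := fun a ha => ⟨a, ha, le_rfl⟩

lemma up_mono {A B : Set L} (h : A ⊆ B) : up A ⊆ up B :=
  fun _ ⟨a, ha, hax⟩ => ⟨a, h ha, hax⟩

/-- Rudin's directed set is a minimal such `E`. -/
def RudinCandidate (𝔉 : Set (Set L)) (E : Set L) : Prop :=
  E ⊆ ⋃₀ 𝔉 ∧ (∀ x ∈ E, ∀ y ∈ ⋃₀ 𝔉, y ≤ x → y ∈ E) ∧ ∀ F ∈ 𝔉, (E ∩ F).Nonempty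

variable {𝔉 : Set (Set L)}

lemma rudinCandidate_sUnion (hne : ∀ F ∈ 𝔉, F.Nonempty) : RudinCandidate 𝔉 (⋃₀ 𝔉) := by
  refine ⟨Subset.rfl, fun _ _ y hy _ => hy, fun F hF => ?_⟩
  obtain ⟨f, hf⟩ := hne F hF
  exact ⟨f, ⟨F, hF, hf⟩, hf⟩

/-- On a finite `F` the chain `E ∩ F`, `E ∈ c`, has a least member, which is nonempty. -/
lemma RudinCandidate.sInter_of_isChain (hfin : ∀ F ∈ 𝔉, F.Finite) {c : Set (Set L)}
    (hc : ∀ E ∈ c, RudinCandidate 𝔉 E) (hchain : IsChain (· ⊆ ·) c) (hne : c.Nonempty) :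
    RudinCandidate 𝔉 (⋂₀ c) := by
  refine ⟨?_, fun x hx y hy hyx E hE => (hc E hE).2.1 x (hx E hE) y hy hyx, fun F hF => ?_⟩
  · obtain ⟨E₀, hE₀⟩ := hne
    exact (sInter_subset_of_mem hE₀).trans (hc E₀ hE₀).1
  have himfin : ((· ∩ F) '' c).Finite :=
    (hfin F hF).finite_subsets.subset (by rintro _ ⟨E, -, rfl⟩; exact inter_subset_right)
  obtain ⟨E₀, hE₀, hE₀min⟩ := Set.Finite.exists_minimalFor' (· ∩ F) c himfin hne
  have hleast : ∀ E ∈ c, E₀ ∩ F ⊆ E ∩ F := fun E hE =>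
    (hchain.total hE₀ hE).elim (inter_subset_inter_left F)
      (fun h => hE₀min hE (inter_subset_inter_left F h))
  obtain ⟨x, hxE₀, hxF⟩ := (hc E₀ hE₀).2.2 F hF
  exact ⟨x, fun E hE => (hleast E hE ⟨hxE₀, hxF⟩).1, hxF⟩

lemma exists_minimal_rudinCandidate (hfin : ∀ F ∈ 𝔉, F.Finite ∧ F.Nonempty) :
    ∃ E, Minimal (RudinCandidate 𝔉) E := by
  obtain ⟨E, -, hE⟩ := zorn_superset_nonempty {E | RudinCandidate 𝔉 E}
    (fun c hc hchain hne => ⟨⋂₀ c, RudinCandidate.sInter_of_isChain (fun F hF => (hfin F hF).1)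
      hc hchain hne, fun _ => sInter_subset_of_mem⟩)
    _ (rudinCandidate_sUnion fun F hF => (hfin F hF).2)
  exact ⟨E, hE⟩

/-- Otherwise removing `↑x` from `E` would leave a smaller candidate. -/
lemma Minimal.exists_le_of_rudinCandidate {E : Set L} (hE : Minimal (RudinCandidate 𝔉) E)
    {x : L} (hx : x ∈ E) : ∃ F ∈ 𝔉, ∀ z ∈ E ∩ F, x ≤ z := by
  by_contra! hcon
  obtain ⟨hEU, hElow, -⟩ := hE.prop
  have hcand : RudinCandidate 𝔉 {z ∈ E | ¬ x ≤ z} := by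
    refine ⟨fun z hz => hEU hz.1, fun z hz y hy hyz => ?_, fun F hF => ?_⟩
    · exact ⟨hElow z hz.1 y hy hyz, fun hxy => hz.2 (hxy.trans hyz)⟩
    · obtain ⟨z, ⟨hzE, hzF⟩, hxz⟩ := hcon F hF
      exact ⟨z, ⟨hzE, hxz⟩, hzF⟩
  exact (hE.le_of_le hcand (fun z hz => hz.1) hx).2 le_rfl

lemma Minimal.directedOn_of_rudinCandidate {E : Set L} (hE : Minimal (RudinCandidate 𝔉) E)
    (hdir : DirectedOn (fun F G => up G ⊆ up F) 𝔉) : DirectedOn (· ≤ ·) E := by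
  obtain ⟨-, hElow, hEhit⟩ := hE.prop
  intro x hx y hy
  obtain ⟨Fx, hFx, hxle⟩ := hE.exists_le_of_rudinCandidate hx
  obtain ⟨Fy, hFy, hyle⟩ := hE.exists_le_of_rudinCandidate hy
  obtain ⟨G, hG, hGx, hGy⟩ := hdir Fx hFx Fy hFy
  obtain ⟨z, hzE, hzG⟩ := hEhit G hG
  obtain ⟨a, haFx, haz⟩ := hGx (subset_up G hzG)
  obtain ⟨b, hbFy, hbz⟩ := hGy (subset_up G hzG)
  have haE : a ∈ E := hElow z hzE a ⟨Fx, hFx, haFx⟩ haz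
  have hbE : b ∈ E := hElow z hzE b ⟨Fy, hFy, hbFy⟩ hbz
  exact ⟨z, hzE, (hxle a ⟨haE, haFx⟩).trans haz, (hyle b ⟨hbE, hbFy⟩).trans hbz⟩

/-- Rudin's lemma. -/
theorem exists_directedOn_subset_sUnion_inter_up_nonempty (hne : 𝔉.Nonempty)
    (hfin : ∀ F ∈ 𝔉, F.Finite ∧ F.Nonempty) (hdir : DirectedOn (fun F G => up G ⊆ up F) 𝔉) :
    ∃ D ⊆ ⋃₀ 𝔉, D.Nonempty ∧ DirectedOn (· ≤ ·) D ∧ ∀ F ∈ 𝔉, (D ∩ up F).Nonempty := by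
  obtain ⟨E, hE⟩ := exists_minimal_rudinCandidate hfin
  obtain ⟨hEU, -, hEhit⟩ := hE.prop
  obtain ⟨F₀, hF₀⟩ := hne
  refine ⟨E, hEU, (hEhit F₀ hF₀).mono inter_subset_left,
    hE.directedOn_of_rudinCandidate hdir, fun F hF => ?_⟩
  obtain ⟨z, hzE, hzF⟩ := hEhit F hF
  exact ⟨z, hzE, subset_up F hzF⟩

end Rudin

section ScottClosure

variable {L : Type*} [Preorder L]

lemma subset_weakOneStep (A : Set L) : A ⊆ weakOneStep A := fun a ha =>
  ⟨{a}, fun _ hx => ⟨a, ha, le_of_eq hx⟩, singleton_nonempty a, directedOn_singleton a, a,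
    isLUB_singleton, le_rfl⟩

lemma isLowerSet_weakOneStep (A : Set L) : IsLowerSet (weakOneStep A) :=
  fun _ _ hba ⟨D, hDA, hDne, hDdir, y, hy, hay⟩ => ⟨D, hDA, hDne, hDdir, y, hy, hba.trans hay⟩

lemma scottCl_eq_weakOneStep_of_dirSupClosed {A : Set L} (h : DirSupClosed (weakOneStep A)) :
    scottCl A = weakOneStep A := by
  let _ := Topology.scott L univ
  have : Topology.IsScott L univ := ⟨rfl⟩
  have isClosed_iff {s : Set L} : IsClosed s ↔ IsLowerSet s ∧ DirSupClosed s :=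
    Topology.IsScott.isClosed_iff_isLowerSet_and_dirSupClosed
  refine (closure_minimal (subset_weakOneStep A)
    (isClosed_iff.2 ⟨isLowerSet_weakOneStep A, h⟩)).antisymm ?_
  obtain ⟨hlow, hsup⟩ := isClosed_iff.1 (isClosed_closure (s := A))
  rintro x ⟨D, hDA, hDne, hDdir, y, hy, hxy⟩
  have hD : D ⊆ closure A := fun z hz => by
    obtain ⟨a, ha, hza⟩ := hDA hz
    exact hlow hza (subset_closure ha)
  exact hlow hxy (hsup hD hDne hDdir hy)

end ScottClosure

section FinWayBelow

variable {L : Type*} [Preorder L]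

lemma up_biUnion (G : Set L) (φ : L → Set L) : up (⋃ g ∈ G, φ g) = ⋃ g ∈ G, up (φ g) := by
  ext x
  simp only [up, mem_iUnion, mem_ofPred_eq]
  aesop

lemma finWayBelow.of_le {F : Set L} {x y : L} (h : finWayBelow F x) (hxy : x ≤ y) :
    finWayBelow F y :=
  fun D hne hdir s hs hys => h D hne hdir s hs (hxy.trans hys)

lemma finWayBelow.mono {F G : Set L} {x : L} (h : finWayBelow F x) (hFG : F ⊆ G) :
    finWayBelow G x :=
  fun D hne hdir s hs hxs => (h D hne hdir s hs hxs).mono (inter_subset_inter_right D (up_mono hFG))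

lemma finWayBelow.inter_dw_nonempty {F A : Set L} {x : L} (h : finWayBelow F x)
    (hx : x ∈ weakOneStep A) : (F ∩ dw A).Nonempty := by
  obtain ⟨D, hDA, hDne, hDdir, y, hy, hxy⟩ := hx
  obtain ⟨d, hdD, f, hfF, hfd⟩ := h D hDne hDdir y hy hxy
  obtain ⟨a, haA, hda⟩ := hDA hdD
  exact ⟨f, hfF, a, haA, hfd.trans hda⟩

/-- `fin(x)`. -/
def finWayBelowSets (x : L) : Set (Set L) := {F | F.Finite ∧ finWayBelow F x}

def iteratedFinWayBelowSets (x : L) : Set (Set L) :=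
  {H | H.Finite ∧ ∃ G ∈ finWayBelowSets x, ∀ g ∈ G, finWayBelow H g}

lemma biUnion_mem_iteratedFinWayBelowSets {x : L} {G : Set L} (hG : G ∈ finWayBelowSets x)
    {φ : L → Set L} (hφ : ∀ g ∈ G, φ g ∈ finWayBelowSets g) :
    (⋃ g ∈ G, φ g) ∈ iteratedFinWayBelowSets x :=
  ⟨hG.1.biUnion fun g hg => (hφ g hg).1, G, hG,
    fun g hg => (hφ g hg).2.mono (subset_biUnion_of_mem hg)⟩

lemma inter_dw_nonempty_of_mem_iteratedFinWayBelowSets {A E : Set L} (hEA : E ⊆ weakOneStep A)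
    (hEne : E.Nonempty) (hEdir : DirectedOn (· ≤ ·) E) {s : L} (hs : IsLUB E s) {H : Set L}
    (hH : H ∈ iteratedFinWayBelowSets s) : (H ∩ dw A).Nonempty := by
  obtain ⟨-, G, ⟨-, hGs⟩, hHG⟩ := hH
  obtain ⟨e, heE, g, hgG, hge⟩ := hGs E hEne hEdir s hs le_rfl
  exact ((hHG g hgG).of_le hge).inter_dw_nonempty (hEA heE)

lemma up_inter_dw_subset {F G A : Set L} (h : up G ⊆ up F) : up (G ∩ dw A) ⊆ up (F ∩ dw A) := by
  rintro x ⟨g, ⟨hgG, a, haA, hga⟩, hgx⟩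
  obtain ⟨f, hfF, hfg⟩ := h (subset_up G hgG)
  exact ⟨f, ⟨hfF, a, haA, hfg.trans hga⟩, hfg.trans hgx⟩

/-- Rudin's lemma applied to the traces `F ∩ ↓A`. -/
lemma mem_weakOneStep_of_smythDirected {A : Set L} {x : L} (hdcpo : IsDcpo L)
    {𝔉 : Set (Set L)} (hne : 𝔉.Nonempty) (hfin : ∀ F ∈ 𝔉, F.Finite)
    (hdir : DirectedOn (fun F G => up G ⊆ up F) 𝔉) (hA : ∀ F ∈ 𝔉, (F ∩ dw A).Nonempty)
    (hx : ⋂ F ∈ 𝔉, up F ⊆ up {x}) : x ∈ weakOneStep A := by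
  have hdir' : DirectedOn (fun F G => up G ⊆ up F) ((· ∩ dw A) '' 𝔉) :=
    directedOn_image.2 <| hdir.mono' fun _ _ _ _ h => up_inter_dw_subset h
  obtain ⟨D, hDsub, hDne, hDdir, hDhit⟩ := exists_directedOn_subset_sUnion_inter_up_nonempty
    (hne.image _) (by rintro _ ⟨F, hF, rfl⟩; exact ⟨(hfin F hF).subset inter_subset_left, hA F hF⟩)
    hdir'
  have hDA : D ⊆ dw A := fun z hz => by
    obtain ⟨_, ⟨F, -, rfl⟩, hzF⟩ := hDsub hz
    exact hzF.2
  obtain ⟨d, hd⟩ := hdcpo D hDne hDdir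
  have hdup : d ∈ ⋂ F ∈ 𝔉, up F := mem_iInter₂.2 fun F hF => by
    obtain ⟨z, hzD, f, hf, hfz⟩ := hDhit _ (mem_image_of_mem _ hF)
    exact ⟨f, hf.1, hfz.trans (hd.1 hzD)⟩
  obtain ⟨_, rfl, hxd⟩ := hx hdup
  exact ⟨D, hDA, hDne, hDdir, d, hd, hxd⟩

end FinWayBelow

section Quasicontinuous

variable {L : Type*} [Preorder L]

lemma QuasicontinuousPoset.iteratedFinWayBelowSets_nonempty (hqc : QuasicontinuousPoset L)
    (x : L) : (iteratedFinWayBelowSets x).Nonempty := by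
  obtain ⟨G, hG⟩ := (hqc x).1
  choose φ hφ using fun g => (hqc g).1
  exact ⟨_, biUnion_mem_iteratedFinWayBelowSets hG fun g _ => hφ g⟩

lemma QuasicontinuousPoset.directedOn_iteratedFinWayBelowSets (hqc : QuasicontinuousPoset L)
    (x : L) : DirectedOn (fun F G => up G ⊆ up F) (iteratedFinWayBelowSets x) := by
  rintro H₁ ⟨hH₁fin, G₁, hG₁, hH₁⟩ H₂ ⟨hH₂fin, G₂, hG₂, hH₂⟩
  obtain ⟨G, hG, hGG₁, hGG₂⟩ := (hqc x).2.1 G₁ hG₁ G₂ hG₂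
  have hbelow : ∀ g ∈ G, ∃ F ∈ finWayBelowSets g, up F ⊆ up H₁ ∧ up F ⊆ up H₂ := by
    intro g hg
    obtain ⟨g₁, hg₁, hg₁g⟩ := hGG₁ (subset_up G hg)
    obtain ⟨g₂, hg₂, hg₂g⟩ := hGG₂ (subset_up G hg)
    exact (hqc g).2.1 H₁ ⟨hH₁fin, (hH₁ g₁ hg₁).of_le hg₁g⟩ H₂ ⟨hH₂fin, (hH₂ g₂ hg₂).of_le hg₂g⟩
  choose! φ hφ hφ₁ hφ₂ using hbelow
  exact ⟨_, biUnion_mem_iteratedFinWayBelowSets hG hφ,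
    (up_biUnion G φ).trans_subset (iUnion₂_subset hφ₁),
    (up_biUnion G φ).trans_subset (iUnion₂_subset hφ₂)⟩

lemma QuasicontinuousPoset.biInter_up_iteratedFinWayBelowSets_subset
    (hqc : QuasicontinuousPoset L) (x : L) :
    ⋂ H ∈ iteratedFinWayBelowSets x, up H ⊆ up {x} := by
  intro y hy
  rw [(hqc x).2.2]
  refine mem_iInter₂.2 fun G hG => ?_
  by_contra hyG
  have hsep : ∀ g ∈ G, ∃ F ∈ finWayBelowSets g, y ∉ up F := by
    intro g hg
    have hgy : y ∉ up {g} := by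
      rintro ⟨_, rfl, hgy⟩
      exact hyG ⟨_, hg, hgy⟩
    rw [(hqc g).2.2, mem_iInter₂] at hgy
    push Not at hgy
    exact hgy
  choose! φ hφ hyφ using hsep
  have hyH := mem_iInter₂.1 hy _ (biUnion_mem_iteratedFinWayBelowSets hG hφ)
  rw [up_biUnion, mem_iUnion₂] at hyH
  obtain ⟨g, hg, hyg⟩ := hyH
  exact hyφ g hg hyg

lemma QuasicontinuousPoset.dirSupClosed_weakOneStep (hdcpo : IsDcpo L)
    (hqc : QuasicontinuousPoset L) (A : Set L) : DirSupClosed (weakOneStep A) :=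
  fun _ hEA hEne hEdir s hs => mem_weakOneStep_of_smythDirected hdcpo
    (hqc.iteratedFinWayBelowSets_nonempty s) (fun _ hH => hH.1)
    (hqc.directedOn_iteratedFinWayBelowSets s)
    (fun _ hH => inter_dw_nonempty_of_mem_iteratedFinWayBelowSets hEA hEne hEdir hs hH)
    (hqc.biInter_up_iteratedFinWayBelowSets_subset s)

end Quasicontinuous

/-- Every quasicontinuous dcpo has weak one-step closure. -/
theorem quasicontinuous_dcpo_hasWeakOneStepClosure {L : Type*} [PartialOrder L]
    (hdcpo : IsDcpo L) (hqc : QuasicontinuousPoset L) :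
    HasWeakOneStepClosure L := fun A =>
  scottCl_eq_weakOneStep_of_dirSupClosed (hqc.dirSupClosed_weakOneStep hdcpo A)
end

section
/- There exists a quasicontinuous poset that does not have weak one-step closure. Specifically, let L = (ℕ × (ℕ ∪ {ω})) ∪ ℕ with the order: (m,n₁) ≤ (m,n₂) iff n₁ ≤ n₂; (m,n) ≤ (m,ω); x ≤ y for x,y ∈ ℕ with x ≤ y; (m,n) ≤ k for k ∈ ℕ with k ≥ n and m ≥ 2; (1,n) ≤ (m₂,ω) when m₂ ≥ n; (m₁,n) ≤ (m₂,n) when 2 ≤ m₁ ≤ m₂. Then L is quasicontinuous, but cl(ℕ) = L while (1,ω) ∉ ℕ''. -/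
open Set

/-- The poset `L = (ℕ × (ℕ ∪ {ω})) ∪ ℕ` of the example.  Indices are shifted by one so that
the paper's `ℕ = {1, 2, ...}` corresponds to Lean's `ℕ = {0, 1, ...}`:  `p m n` represents the
pair `(m+1, n+1)`, `pw m` represents `(m+1, ω)` and `nt k` represents the natural number
`k+1`. -/
inductive L₂ : Type where
  | p : ℕ → ℕ → L₂
  | pw : ℕ → L₂
  | nt : ℕ → L₂

namespace L₂

/-- The order of the example: the reflexive-transitive closure of the clauses
(i) `(m,n₁) ≤ (m,n₂)` iff `n₁ ≤ n₂`; (ii) `(m,n) ≤ (m,ω)`; (iii) the usual order on `ℕ`;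
(iv) `(m,n) ≤ k` for `k ∈ ℕ` with `k ≥ n`, `m ≥ 2`; (v) `(1,n) ≤ (m₂,ω)` for `m₂ ≥ n`;
(vi) `(m₁,n) ≤ (m₂,n)` for `2 ≤ m₁ ≤ m₂` (with `n ∈ ℕ ∪ {ω}`), stated with shifted
indices (paper's `m ≥ 2` becomes `m ≥ 1`, paper's `m = 1` becomes `m = 0`). -/
protected def le : L₂ → L₂ → Prop
  | p m n₁, p m' n₂ => (m = m' ∨ (1 ≤ m ∧ m ≤ m')) ∧ n₁ ≤ n₂
  | p m n₁, pw m' => m = m' ∨ (1 ≤ m ∧ m ≤ m') ∨ (m = 0 ∧ n₁ ≤ m')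
  | p m n, nt k => 1 ≤ m ∧ n ≤ k
  | pw m₁, pw m₂ => m₁ = m₂ ∨ (1 ≤ m₁ ∧ m₁ ≤ m₂)
  | nt j, nt k => j ≤ k
  | _, _ => False

instance : PartialOrder L₂ where
  le := L₂.le
  le_refl x := by cases x <;> simp [L₂.le]
  le_trans x y z hxy hyz := by
    cases x <;> cases y <;> cases z <;> simp_all [L₂.le] <;> omega
  le_antisymm x y hxy hyx := by
    cases x <;> cases y <;> simp_all [L₂.le] <;> omega

end L₂

/-!
Each `x` is approximated from below by a chain `approx x` whose supremum lies above `x`. In the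
paper's notation: `(1, n)` by the row `(max n 2, ·)`, `(m, ω)` by the row `(m, ·)`, `k ∈ ℕ` by the
column `(· + 1, k)`, and the compact elements `(m, n)`, `m ≥ 2`, by themselves. A directed set
that does not contain its supremum consists of pairs whose first coordinates are bounded and second
coordinates unbounded, or vice versa; it is then cofinal with the row of its largest first
coordinate, or with the column of its largest second coordinate. So `{x, approx x t} ≪ x` for every
`t`, and these sets form a chain, cofinal in `fin(x)` for the Smyth preorder, whose upper sets
intersect to `↑x`.

The closure `cl(ℕ)` contains the rows `m ≥ 2` (they lie below `ℕ`), their suprema `(m, ω)`, hence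
row `1` (as `(1, n) ≤ (n + 1, ω)`) and its supremum `(1, ω)`. But `(1, ω)` is the only element
above itself, and nothing below it lies below some `k ∈ ℕ`, so `(1, ω) ∉ ℕ''`.
-/

section Preorder

variable {α : Type*} [Preorder α]

lemma mem_up_of_le {F : Set α} {x y : α} (hx : x ∈ up F) (hxy : x ≤ y) :
    y ∈ up F :=
  let ⟨a, ha, hax⟩ := hx
  ⟨a, ha, hax.trans hxy⟩

lemma mem_up_pair {a b y : α} : y ∈ up {a, b} ↔ a ≤ y ∨ b ≤ y := by
  simp [up]

lemma mem_up_of_finWayBelow {F : Set α} {x : α} (h : finWayBelow F x) :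
    x ∈ up F := by
  obtain ⟨d, hd, hdF⟩ :=
    h {x} (singleton_nonempty x) (directedOn_singleton x) x isLUB_singleton le_rfl
  rwa [mem_singleton_iff.mp hd] at hdF

theorem QuasicontinuousPoset.of_approx (c : α → ℕ → α) (hc : ∀ x, Monotone (c x))
    (hsup : ∀ x, ∃ s, IsLUB (range (c x)) s ∧ x ≤ s) (hwb : ∀ x t, finWayBelow {x, c x t} x) :
    QuasicontinuousPoset α := by
  intro x
  have hfin : ∀ t, ({x, c x t} : Set α).Finite := fun t => (finite_singleton _).insert x
  have hanti : ∀ {t t'}, t ≤ t' → up {x, c x t'} ⊆ up {x, c x t} := fun h _ hy =>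
    mem_up_pair.2 ((mem_up_pair.1 hy).imp_right ((hc x h).trans))
  obtain ⟨s, hs, hxs⟩ := hsup x
  have hcof : ∀ F, finWayBelow F x → ∃ t, up {x, c x t} ⊆ up F := by
    intro F hF
    obtain ⟨_, ⟨t, rfl⟩, htF⟩ :=
      hF _ (range_nonempty _) (hc x).directed_le.directedOn_range s hs hxs
    refine ⟨t, fun y hy => (mem_up_pair.1 hy).elim ?_ (mem_up_of_le htF)⟩
    exact mem_up_of_le (mem_up_of_finWayBelow hF)
  refine ⟨⟨_, hfin 0, hwb x 0⟩, ?_, ?_⟩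
  · rintro F ⟨-, hF⟩ G ⟨-, hG⟩
    obtain ⟨t₁, h₁⟩ := hcof F hF
    obtain ⟨t₂, h₂⟩ := hcof G hG
    exact ⟨_, ⟨hfin (max t₁ t₂), hwb x _⟩, (hanti (le_max_left _ _)).trans h₁,
      (hanti (le_max_right _ _)).trans h₂⟩
  · ext y
    simp only [mem_iInter]
    refine ⟨fun hy F hF => ?_, fun hy => ?_⟩
    · obtain ⟨_, rfl, hxy⟩ := hy
      exact mem_up_of_le (mem_up_of_finWayBelow hF.2) hxy
    · refine ⟨x, rfl, ?_⟩
      by_contra hxy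
      have hub : ∀ t, c x t ≤ y := fun t =>
        ((mem_up_pair.1 (hy _ ⟨hfin t, hwb x t⟩)).resolve_left hxy)
      exact hxy (hxs.trans (hs.2 (forall_mem_range.2 hub)))

lemma subset_scottCl (A : Set α) : A ⊆ scottCl A :=
  @subset_closure α (Topology.scott α univ) A

lemma mem_scottCl_of_le {A : Set α} {x y : α} (hxy : x ≤ y) (hy : y ∈ scottCl A) :
    x ∈ scottCl A := by
  let _ := Topology.scott α univ
  have : Topology.IsScott α univ := ⟨rfl⟩
  exact Topology.IsScott.isLowerSet_of_isClosed isClosed_closure hxy hy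

lemma mem_scottCl_of_isLUB_range {A : Set α} {f : ℕ → α} {x : α}
    (hf : Monotone f) (hx : IsLUB (range f) x) (hA : ∀ t, f t ∈ scottCl A) : x ∈ scottCl A := by
  let _ := Topology.scott α univ
  have : Topology.IsScott α univ := ⟨rfl⟩
  exact Topology.IsScott.dirSupClosed_of_isClosed isClosed_closure (range_subset_iff.2 hA)
    (range_nonempty f) hf.directed_le.directedOn_range hx

lemma IsLUB.of_cofinal {A B : Set α} {u : α} (hB : IsLUB B u)
    (hAB : ∀ a ∈ A, ∃ b ∈ B, a ≤ b) (hBA : ∀ b ∈ B, ∃ a ∈ A, b ≤ a) : IsLUB A u := by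
  refine (isLUB_congr ?_).1 hB
  ext v
  refine ⟨fun hv a ha => ?_, fun hv b hb => ?_⟩
  · obtain ⟨b, hb, hab⟩ := hAB a ha
    exact hab.trans (hv hb)
  · obtain ⟨a, ha, hba⟩ := hBA b hb
    exact hba.trans (hv ha)

lemma DirectedOn.exists_ge_of_bddAbove_of_not_bddAbove {D : Set α}
    (hD : DirectedOn (· ≤ ·) D) {g h : α → ℕ} (hg : MonotoneOn g D) (hh : MonotoneOn h D)
    (hgD : BddAbove (g '' D)) (hhD : ¬ BddAbove (h '' D)) (hne : D.Nonempty) :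
    ∀ d ∈ D, ∀ t : ℕ, ∃ e ∈ D, d ≤ e ∧ g e = sSup (g '' D) ∧ t ≤ h e := by
  intro d hd t
  obtain ⟨a, ha, hga⟩ := Nat.sSup_mem (hne.image g) hgD
  obtain ⟨_, ⟨b, hb, rfl⟩, htb⟩ := not_bddAbove_iff.1 hhD t
  obtain ⟨e₁, he₁, hde₁, hbe₁⟩ := hD d hd b hb
  obtain ⟨e, he, he₁e, hae⟩ := hD e₁ he₁ a ha
  exact ⟨e, he, hde₁.trans he₁e, le_antisymm (le_csSup hgD (mem_image_of_mem g he))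
    (hga ▸ hg ha he hae), htb.le.trans (hh hb he (hbe₁.trans he₁e))⟩

end Preorder

lemma IsLUB.mem_of_finite_inter_Ici {α : Type*} [PartialOrder α] {D : Set α} {s d : α}
    (hD : DirectedOn (· ≤ ·) D) (hs : IsLUB D s) (hd : d ∈ D) (hfin : (D ∩ Ici d).Finite) :
    s ∈ D := by
  obtain ⟨e, -, he, hmax⟩ := hfin.exists_le_maximal ⟨hd, le_rfl⟩
  have hub : ∀ a ∈ D, a ≤ e :=
    hD.is_top_of_is_max he.1 fun a ha hea => hmax ⟨ha, he.2.trans hea⟩ hea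
  rw [hs.unique ⟨hub, fun _ hu => hu he.1⟩]
  exact he.1

namespace L₂

@[simp] lemma p_le_p {m n m' n' : ℕ} :
    p m n ≤ p m' n' ↔ (m = m' ∨ 1 ≤ m ∧ m ≤ m') ∧ n ≤ n' := Iff.rfl
@[simp] lemma p_le_pw {m n m' : ℕ} :
    p m n ≤ pw m' ↔ m = m' ∨ 1 ≤ m ∧ m ≤ m' ∨ m = 0 ∧ n ≤ m' := Iff.rfl
@[simp] lemma p_le_nt {m n k : ℕ} : p m n ≤ nt k ↔ 1 ≤ m ∧ n ≤ k := Iff.rfl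
@[simp] lemma pw_le_pw {m m' : ℕ} : pw m ≤ pw m' ↔ m = m' ∨ 1 ≤ m ∧ m ≤ m' := Iff.rfl
@[simp] lemma nt_le_nt {j k : ℕ} : nt j ≤ nt k ↔ j ≤ k := Iff.rfl
@[simp] lemma not_pw_le_p {a m n : ℕ} : ¬ pw a ≤ p m n := id
@[simp] lemma not_pw_le_nt {a k : ℕ} : ¬ pw a ≤ nt k := id
@[simp] lemma not_nt_le_p {k m n : ℕ} : ¬ nt k ≤ p m n := id
@[simp] lemma not_nt_le_pw {k a : ℕ} : ¬ nt k ≤ pw a := id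

def approx : L₂ → ℕ → L₂
  | p 0 n, t => p (max n 1) t
  | p (m + 1) n, _ => p (m + 1) n
  | pw m, t => p m t
  | nt k, t => p (t + 1) k

def row : L₂ → ℕ
  | p m _ => m
  | _ => 0

def col : L₂ → ℕ
  | p _ n => n
  | _ => 0

lemma approx_mono (x : L₂) : Monotone (approx x) := by
  intro t t' h
  rcases x with ⟨_ | m, n⟩ | m | k <;> simp [approx] <;> omega

lemma isLUB_range_approx_pw (M : ℕ) : IsLUB (range (approx (pw M))) (pw M) := by
  refine ⟨forall_mem_range.2 fun t => by simp [approx], fun u hu => ?_⟩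
  rw [mem_upperBounds, forall_mem_range] at hu
  rcases u with ⟨a, b⟩ | a | k
  · have := hu (b + 1); simp [approx] at this
  · have := hu (a + 1); simp [approx] at this ⊢; omega
  · have := hu (k + 1); simp [approx] at this

lemma isLUB_range_approx_nt (k : ℕ) : IsLUB (range (approx (nt k))) (nt k) := by
  refine ⟨forall_mem_range.2 fun t => by simp [approx], fun u hu => ?_⟩
  rw [mem_upperBounds, forall_mem_range] at hu
  rcases u with ⟨a, b⟩ | a | K
  · have := hu (a + 1); simp [approx] at this; omega
  · have := hu (a + 1); simp [approx] at this; omega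
  · simpa [approx] using hu 0

lemma exists_isLUB_range_approx (x : L₂) : ∃ s, IsLUB (range (approx x)) s ∧ x ≤ s := by
  rcases x with ⟨_ | m, n⟩ | M | k
  · exact ⟨pw (max n 1), isLUB_range_approx_pw _, by simp⟩
  · refine ⟨p (m + 1) n, ?_, le_rfl⟩
    change IsLUB (range fun _ : ℕ => p (m + 1) n) _
    rw [range_const]
    exact isLUB_singleton
  · exact ⟨pw M, isLUB_range_approx_pw M, le_rfl⟩
  · exact ⟨nt k, isLUB_range_approx_nt k, le_rfl⟩

lemma exists_approx_le {x s : L₂} (t : ℕ) (h : x ≤ s) :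
    ∃ j, x ≤ approx s j ∨ approx x t ≤ approx s j := by
  rcases x with ⟨m, n⟩ | a | k
  · refine ⟨t + m + n, ?_⟩
    rcases m with _ | m <;> rcases s with ⟨_ | m', n'⟩ | a' | k' <;> simp [approx] at h ⊢ <;> omega
  all_goals
    refine ⟨t, ?_⟩
    rcases s with ⟨_ | m', n'⟩ | a' | k' <;> simp [approx] at h ⊢
    omega

lemma finite_Icc_pw (a : ℕ) (s : L₂) : (Icc (pw a) s).Finite := by
  rcases s with ⟨m, n⟩ | S | k
  · refine finite_empty.subset fun e ⟨h₁, h₂⟩ => ?_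
    rcases e with ⟨_, _⟩ | _ | _ <;> simp at h₁ h₂
  · refine ((finite_Iic S).image pw).subset fun e ⟨h₁, h₂⟩ => ?_
    rcases e with ⟨_, _⟩ | b | _ <;> simp at h₁ h₂
    exact ⟨b, by simp; omega, rfl⟩
  · refine finite_empty.subset fun e ⟨h₁, h₂⟩ => ?_
    rcases e with ⟨_, _⟩ | _ | _ <;> simp at h₁ h₂

lemma finite_Icc_nt (a : ℕ) (s : L₂) : (Icc (nt a) s).Finite := by
  rcases s with ⟨m, n⟩ | S | K
  · refine finite_empty.subset fun e ⟨h₁, h₂⟩ => ?_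
    rcases e with ⟨_, _⟩ | _ | _ <;> simp at h₁ h₂
  · refine finite_empty.subset fun e ⟨h₁, h₂⟩ => ?_
    rcases e with ⟨_, _⟩ | _ | _ <;> simp at h₁ h₂
  · refine ((finite_Iic K).image nt).subset fun e ⟨h₁, h₂⟩ => ?_
    rcases e with ⟨_, _⟩ | _ | b <;> simp at h₁ h₂
    exact ⟨b, h₂, rfl⟩

section DirectedSup

variable {D : Set L₂} {s : L₂}

lemma p_row_col_eq_of_mem (hD : DirectedOn (· ≤ ·) D) (hs : IsLUB D s) (hsD : s ∉ D) {d : L₂}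
    (hd : d ∈ D) : p (row d) (col d) = d := by
  have hinf : (D ∩ Ici d).Finite → False := fun hfin => hsD (hs.mem_of_finite_inter_Ici hD hd hfin)
  rcases d with ⟨m, n⟩ | a | a
  · rfl
  · exact (hinf ((finite_Icc_pw a s).subset fun e he => ⟨he.2, hs.1 he.1⟩)).elim
  · exact (hinf ((finite_Icc_nt a s).subset fun e he => ⟨he.2, hs.1 he.1⟩)).elim

lemma monotoneOn_row (hp : ∀ d ∈ D, p (row d) (col d) = d) : MonotoneOn row D :=
  fun d hd e he hde => by
    have := (hp d hd).le.trans (hde.trans (hp e he).ge)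
    simp at this
    omega

lemma monotoneOn_col (hp : ∀ d ∈ D, p (row d) (col d) = d) : MonotoneOn col D :=
  fun d hd e he hde => by
    have := (hp d hd).le.trans (hde.trans (hp e he).ge)
    simp at this
    omega

lemma exists_cofinal_row (hne : D.Nonempty) (hD : DirectedOn (· ≤ ·) D)
    (hp : ∀ d ∈ D, p (row d) (col d) = d) (hR : BddAbove (row '' D))
    (hC : ¬ BddAbove (col '' D)) :
    ∃ M, (∀ d ∈ D, ∃ t, d ≤ approx (pw M) t) ∧ ∀ t, ∃ e ∈ D, approx (pw M) t ≤ e := by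
  have key := hD.exists_ge_of_bddAbove_of_not_bddAbove (monotoneOn_row hp) (monotoneOn_col hp)
    hR hC hne
  refine ⟨sSup (row '' D), fun d hd => ?_, fun t => ?_⟩
  · obtain ⟨e, he, hde, hre, -⟩ := key d hd 0
    exact ⟨col e, hde.trans ((hp e he).ge.trans (by simp [approx, hre]))⟩
  · obtain ⟨e, he, -, hre, hte⟩ := key _ hne.some_mem t
    exact ⟨e, he, (by simp [approx, hre, hte] : approx _ t ≤ p (row e) (col e)).trans (hp e he).le⟩

lemma exists_cofinal_col (hne : D.Nonempty) (hD : DirectedOn (· ≤ ·) D)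
    (hp : ∀ d ∈ D, p (row d) (col d) = d) (hR : ¬ BddAbove (row '' D))
    (hC : BddAbove (col '' D)) :
    ∃ J, (∀ d ∈ D, ∃ t, d ≤ approx (nt J) t) ∧ ∀ t, ∃ e ∈ D, approx (nt J) t ≤ e := by
  have key := hD.exists_ge_of_bddAbove_of_not_bddAbove (monotoneOn_col hp) (monotoneOn_row hp)
    hC hR hne
  refine ⟨sSup (col '' D), fun d hd => ?_, fun t => ?_⟩
  · obtain ⟨e, he, hde, hce, hre⟩ := key d hd 1
    exact ⟨row e, hde.trans ((hp e he).ge.trans (by simp [approx, hce]; omega))⟩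
  · obtain ⟨e, he, -, hce, hre⟩ := key _ hne.some_mem (t + 1)
    exact ⟨e, he, (by simp [approx, hce]; omega : approx _ t ≤ p (row e) (col e)).trans
      (hp e he).le⟩

theorem exists_mem_ge_approx (hne : D.Nonempty) (hD : DirectedOn (· ≤ ·) D) (hs : IsLUB D s)
    (hsD : s ∉ D) (t : ℕ) : ∃ e ∈ D, approx s t ≤ e := by
  have hp : ∀ d ∈ D, p (row d) (col d) = d := fun d hd => p_row_col_eq_of_mem hD hs hsD hd
  suffices ∃ x, IsLUB (range (approx x)) x ∧ (∀ d ∈ D, ∃ t, d ≤ approx x t) ∧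
      ∀ t, ∃ e ∈ D, approx x t ≤ e by
    obtain ⟨x, hx, hDx, hxD⟩ := this
    obtain rfl : s = x := hs.unique <| hx.of_cofinal
      (fun d hd => let ⟨t, h⟩ := hDx d hd; ⟨_, mem_range_self t, h⟩)
      (forall_mem_range.2 hxD)
    exact hxD t
  by_cases hR : BddAbove (row '' D) <;> by_cases hC : BddAbove (col '' D)
  · obtain ⟨M, hM⟩ := hR
    obtain ⟨J, hJ⟩ := hC
    have hfin : D.Finite := (((finite_Iic M).prod (finite_Iic J)).image fun q => p q.1 q.2).subset
      fun e he => ⟨(row e, col e), ⟨hM (mem_image_of_mem _ he), hJ (mem_image_of_mem _ he)⟩, hp e he⟩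
    exact (hsD (hs.mem_of_finite_inter_Ici hD hne.some_mem (hfin.inter_of_left _))).elim
  · obtain ⟨M, h⟩ := exists_cofinal_row hne hD hp hR hC
    exact ⟨pw M, isLUB_range_approx_pw M, h⟩
  · obtain ⟨J, h⟩ := exists_cofinal_col hne hD hp hR hC
    exact ⟨nt J, isLUB_range_approx_nt J, h⟩
  · have hbdd : ∀ d ∈ D, p (row d) (col d) ≤ s := fun d hd => (hp d hd).le.trans (hs.1 hd)
    rcases s with ⟨a, _⟩ | a | k
    · exact (hR ⟨a, by rintro _ ⟨d, hd, rfl⟩; have := hbdd d hd; simp at this; omega⟩).elim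
    · exact (hR ⟨a, by rintro _ ⟨d, hd, rfl⟩; have := hbdd d hd; simp at this; omega⟩).elim
    · exact (hC ⟨k, by rintro _ ⟨d, hd, rfl⟩; have := hbdd d hd; simp at this; omega⟩).elim

end DirectedSup

lemma finWayBelow_approx (x : L₂) (t : ℕ) : finWayBelow {x, approx x t} x := by
  intro D hne hD s hs hxs
  by_cases hsD : s ∈ D
  · exact ⟨s, hsD, mem_up_pair.2 (Or.inl hxs)⟩
  obtain ⟨j, hj⟩ := exists_approx_le t hxs
  obtain ⟨e, he, hje⟩ := exists_mem_ge_approx hne hD hs hsD j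
  exact ⟨e, he, mem_up_pair.2 (hj.imp (·.trans hje) (·.trans hje))⟩

theorem quasicontinuous : QuasicontinuousPoset L₂ :=
  .of_approx approx approx_mono exists_isLUB_range_approx finWayBelow_approx

theorem scottCl_range_nt : scottCl (range nt) = univ := by
  have hnt : ∀ k, nt k ∈ scottCl (range nt) := fun k => subset_scottCl _ (mem_range_self k)
  have hp : ∀ m n, p (m + 1) n ∈ scottCl (range nt) := fun m n =>
    mem_scottCl_of_le (by simp) (hnt n)
  have hpw : ∀ M, (∀ t, p M t ∈ scottCl (range nt)) → pw M ∈ scottCl (range nt) := fun M =>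
    mem_scottCl_of_isLUB_range (approx_mono (pw M)) (isLUB_range_approx_pw M)
  have hp₀ : ∀ n, p 0 n ∈ scottCl (range nt) := fun n =>
    mem_scottCl_of_le (by simp : p 0 n ≤ pw (n + 1)) (hpw _ (hp n))
  refine eq_univ_of_forall fun x => ?_
  rcases x with ⟨_ | m, n⟩ | (_ | M) | k
  · exact hp₀ n
  · exact hp m n
  · exact hpw 0 hp₀
  · exact hpw _ (hp M)
  · exact hnt k

theorem pw_zero_not_mem_weakOneStep : pw 0 ∉ weakOneStep (range nt) := by
  rintro ⟨D, hsub, ⟨d, hd⟩, -, y, hy, hle⟩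
  obtain ⟨_, ⟨k, rfl⟩, hdk⟩ := hsub hd
  have hdy := hy.1 hd
  rcases d with ⟨m, n⟩ | a | j <;> rcases y with ⟨_, _⟩ | b | _ <;> simp at hdk hdy hle
  omega

end L₂

/-- `L₂` is a quasicontinuous poset that does not have weak one-step closure:
`cl(ℕ) = L₂` while `(1, ω) ∉ ℕ''`. -/
theorem L₂_quasicontinuous_not_weakOneStep :
    QuasicontinuousPoset L₂ ∧ scottCl (Set.range L₂.nt) = Set.univ ∧
      L₂.pw 0 ∉ weakOneStep (Set.range L₂.nt) ∧ ¬ HasWeakOneStepClosure L₂ := by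
  have hcl := L₂.scottCl_range_nt
  have hnot := L₂.pw_zero_not_mem_weakOneStep
  refine ⟨L₂.quasicontinuous, hcl, hnot, fun h => hnot ?_⟩
  rw [← h, hcl]
  exact mem_univ _
end

section
/- Let X be a well-filtered topological space such that Q(X), the poset of nonempty compact saturated subsets ordered by reverse inclusion, is first-countable in the upper Vietoris topology. Then Q(X) has one-step closure. -/
open Set

section TopoDefs

variable {X : Type*} [TopologicalSpace X]

/-- A set is saturated if it is the intersection of all open sets containing it. -/
def IsSaturatedSet (A : Set X) : Prop := A = ⋂₀ {U : Set X | IsOpen U ∧ A ⊆ U}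

/-- A space is well-filtered if for every filtered family `𝒞` of compact saturated sets
and every open `U` with `⋂𝒞 ⊆ U` there is `K ∈ 𝒞` with `K ⊆ U`. -/
def WellFiltered (X : Type*) [TopologicalSpace X] : Prop :=
  ∀ 𝒞 : Set (Set X), 𝒞.Nonempty → (∀ K ∈ 𝒞, IsCompact K ∧ IsSaturatedSet K) →
    DirectedOn (fun A B => B ⊆ A) 𝒞 →
    ∀ U : Set X, IsOpen U → ⋂₀ 𝒞 ⊆ U → ∃ K ∈ 𝒞, K ⊆ U

end TopoDefs

/-- `Q(X)`: the nonempty compact saturated subsets of `X`. -/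
def QNE (X : Type*) [TopologicalSpace X] : Type _ :=
  {K : Set X // K.Nonempty ∧ IsCompact K ∧ IsSaturatedSet K}

/-- `Q(X)` is ordered by reverse inclusion. -/
instance {X : Type*} [TopologicalSpace X] : PartialOrder (QNE X) where
  le K K' := K'.1 ⊆ K.1
  le_refl K := subset_rfl
  le_trans _ _ _ h1 h2 := Set.Subset.trans h2 h1
  le_antisymm a b h1 h2 := Subtype.ext (Set.Subset.antisymm h2 h1)

/-- The upper Vietoris topology on `Q(X)`, generated by the sets `□U = {K : K ⊆ U}`. -/
def upperVietoris (X : Type*) [TopologicalSpace X] : TopologicalSpace (QNE X) :=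
  TopologicalSpace.generateFrom {s | ∃ U : Set X, IsOpen U ∧ s = {K : QNE X | K.1 ⊆ U}}

/-
Well-filteredness makes every box `□U` Scott open, so a point `K` of the Scott closure of `A` lies
in its upper Vietoris closure, and first countability yields a sequence `aₙ ∈ A` converging to `K`.
A convergent sequence together with its limit is compact, and the union of a compact family in
`Q(X)` is again compact saturated. Hence the tails `Cₙ = K ∪ ⋃_{m ≥ n} aₘ` form a chain in `Q(X)`
with `Cₙ ⊇ aₙ`, and since they eventually enter every open neighbourhood of the saturated set `K`,
their supremum `⋂ Cₙ` is `K`.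
-/

open Filter Topology

theorem oneStep_subset_scottCl {L : Type*} [Preorder L] (A : Set L) : oneStep A ⊆ scottCl A := by
  let _ := Topology.scott L univ
  have _ : Topology.IsScott L univ := ⟨rfl⟩
  rintro x ⟨D, hDA, hne, hdir, hlub⟩
  have hclosed : IsClosed (scottCl A) := isClosed_closure
  have hD : D ⊆ scottCl A := fun d hd => by
    obtain ⟨b, hbA, hdb⟩ := hDA hd
    exact Topology.IsScott.isLowerSet_of_isClosed hclosed hdb (subset_closure hbA)
  exact Topology.IsScott.dirSupClosed_of_isClosed hclosed hD hne hdir hlub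

section

variable {X : Type*} [TopologicalSpace X]

theorem isSaturatedSet_iff {S : Set X} :
    IsSaturatedSet S ↔ ∀ x ∉ S, ∃ U, IsOpen U ∧ S ⊆ U ∧ x ∉ U := by
  refine ⟨fun hS x hx => ?_, fun h => ?_⟩
  · by_contra! hU
    exact hx (hS ▸ fun U hU' => hU U hU'.1 hU'.2)
  · refine (subset_sInter fun U hU => hU.2).antisymm fun x hx => ?_
    by_contra hxS
    obtain ⟨U, hU, hSU, hxU⟩ := h x hxS
    exact hxU (hx U ⟨hU, hSU⟩)

theorem IsSaturatedSet.exists_isOpen_notMem {S : Set X} (hS : IsSaturatedSet S) {x : X}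
    (hx : x ∉ S) : ∃ U, IsOpen U ∧ S ⊆ U ∧ x ∉ U :=
  isSaturatedSet_iff.1 hS x hx

theorem isSaturatedSet_biInter {ι : Type*} {s : Set ι} {S : ι → Set X}
    (h : ∀ i ∈ s, IsSaturatedSet (S i)) : IsSaturatedSet (⋂ i ∈ s, S i) := by
  refine isSaturatedSet_iff.2 fun x hx => ?_
  obtain ⟨i, hi, hxi⟩ : ∃ i ∈ s, x ∉ S i := by simpa using hx
  obtain ⟨U, hU, hSU, hxU⟩ := (h i hi).exists_isOpen_notMem hxi
  exact ⟨U, hU, (biInter_subset_of_mem hi).trans hSU, hxU⟩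

theorem isSaturatedSet_biUnion {ι : Type*} {s : Set ι} {S : ι → Set X}
    (h : ∀ i ∈ s, IsSaturatedSet (S i)) : IsSaturatedSet (⋃ i ∈ s, S i) := by
  refine isSaturatedSet_iff.2 fun x hx => ?_
  have hxS : ∀ i ∈ s, x ∉ S i := by simpa using hx
  choose U hU hSU hxU using fun (i : ι) (hi : i ∈ s) => (h i hi).exists_isOpen_notMem (hxS i hi)
  refine ⟨⋃ i, ⋃ hi : i ∈ s, U i hi, isOpen_iUnion fun i => isOpen_iUnion (hU i),
    iUnion₂_mono hSU, ?_⟩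
  simp only [mem_iUnion, not_exists]
  exact hxU

theorem WellFiltered.exists_val_subset (hwf : WellFiltered X) {d : Set (QNE X)}
    (hne : d.Nonempty) (hdir : DirectedOn (· ≤ ·) d) {U : Set X}
    (hU : IsOpen U) (h : ⋂ K ∈ d, K.1 ⊆ U) : ∃ K ∈ d, K.1 ⊆ U := by
  obtain ⟨_, ⟨K, hK, rfl⟩, hKU⟩ := hwf (Subtype.val '' d) (hne.image _)
    (by rintro _ ⟨K, -, rfl⟩; exact K.2.2)
    (by
      rintro _ ⟨K₁, h₁, rfl⟩ _ ⟨K₂, h₂, rfl⟩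
      obtain ⟨K₃, h₃, h₁₃, h₂₃⟩ := hdir K₁ h₁ K₂ h₂
      exact ⟨K₃.1, ⟨K₃, h₃, rfl⟩, h₁₃, h₂₃⟩)
    U hU fun x hx => h (mem_iInter₂.2 fun K hK => hx _ ⟨K, hK, rfl⟩)
  exact ⟨K, hK, hKU⟩

theorem WellFiltered.biInter_val_subset_of_isLUB
    (hwf : WellFiltered X) {d : Set (QNE X)} (hne : d.Nonempty) (hdir : DirectedOn (· ≤ ·) d)
    {a : QNE X} (ha : IsLUB d a) : ⋂ K ∈ d, K.1 ⊆ a.1 := by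
  set M := ⋂ K ∈ d, K.1
  have hMne : M.Nonempty := by
    by_contra! hM
    obtain ⟨K, -, hK⟩ := hwf.exists_val_subset hne hdir isOpen_empty hM.subset
    exact K.2.1.ne_empty (subset_empty_iff.1 hK)
  have hMc : IsCompact M := isCompact_of_finite_subcover fun U hUo hcov => by
    obtain ⟨K, hK, hKU⟩ := hwf.exists_val_subset hne hdir (isOpen_iUnion hUo) hcov
    obtain ⟨t, ht⟩ := K.2.2.1.elim_finite_subcover U hUo hKU
    exact ⟨t, (biInter_subset_of_mem hK).trans ht⟩
  have hMs : IsSaturatedSet M := isSaturatedSet_biInter fun K _ => K.2.2.2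
  exact ha.2 (show (⟨M, hMne, hMc, hMs⟩ : QNE X) ∈ upperBounds d from
    fun K hK => biInter_subset_of_mem hK)

theorem WellFiltered.isOpen_scott_setOf_val_subset
    (hwf : WellFiltered X) {U : Set X} (hU : IsOpen U) :
    IsOpen[Topology.scott (QNE X) univ] {K : QNE X | K.1 ⊆ U} := by
  let _ := Topology.scott (QNE X) univ
  have _ : Topology.IsScott (QNE X) univ := ⟨rfl⟩
  refine (Topology.IsScott.isOpen_iff_isUpperSet_and_dirSupInaccOn (D := univ)).2
    ⟨fun K L (hKL : L.1 ⊆ K.1) (hK : K.1 ⊆ U) => hKL.trans hK, ?_⟩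
  intro d _ hne hdir a ha haU
  obtain ⟨K, hK, hKU⟩ :=
    hwf.exists_val_subset hne hdir hU ((hwf.biInter_val_subset_of_isLUB hne hdir ha).trans haU)
  exact ⟨K, hK, hKU⟩

theorem WellFiltered.scott_le_upperVietoris (hwf : WellFiltered X) :
    Topology.scott (QNE X) univ ≤ upperVietoris X :=
  le_generateFrom fun _ ⟨_, hU, hs⟩ => hs ▸ hwf.isOpen_scott_setOf_val_subset hU

namespace QNE

attribute [local instance] upperVietoris

theorem isOpen_setOf_val_subset {U : Set X} (hU : IsOpen U) : IsOpen {K : QNE X | K.1 ⊆ U} :=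
  TopologicalSpace.isOpen_generateFrom_of_mem ⟨U, hU, rfl⟩

theorem isCompact_biUnion_val {𝒦 : Set (QNE X)} (h𝒦 : IsCompact 𝒦) :
    IsCompact (⋃ K ∈ 𝒦, K.1) := by
  classical
  refine isCompact_of_finite_subcover fun {ι} U hUo hcov => ?_
  obtain ⟨T, hT⟩ := h𝒦.elim_finite_subcover (fun t : Finset ι => {K : QNE X | K.1 ⊆ ⋃ i ∈ t, U i})
    (fun t => isOpen_setOf_val_subset (isOpen_biUnion fun i _ => hUo i))
    (fun K hK => mem_iUnion.2 <|
      K.2.2.1.elim_finite_subcover U hUo ((subset_biUnion_of_mem hK).trans hcov))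
  refine ⟨T.biUnion id, iUnion₂_subset fun K hK x hx => ?_⟩
  obtain ⟨t, ht, hKt⟩ := mem_iUnion₂.1 (hT hK)
  obtain ⟨i, hi, hxi⟩ := mem_iUnion₂.1 (hKt hx)
  exact mem_biUnion (Finset.mem_biUnion.2 ⟨t, ht, hi⟩) hxi

def biUnion (𝒦 : Set (QNE X)) (h𝒦 : IsCompact 𝒦) (hne : 𝒦.Nonempty) : QNE X :=
  ⟨⋃ K ∈ 𝒦, K.1, hne.elim fun K hK => K.2.1.mono (subset_biUnion_of_mem hK),
    isCompact_biUnion_val h𝒦, isSaturatedSet_biUnion fun K _ => K.2.2.2⟩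

theorem exists_monotone_isLUB_of_tendsto {a : ℕ → QNE X} {K : QNE X}
    (h : Tendsto a atTop (𝓝 K)) :
    ∃ C : ℕ → QNE X, Monotone C ∧ (∀ n, C n ≤ a n) ∧ IsLUB (range C) K := by
  have hc : ∀ n, IsCompact (insert K (a '' Ici n)) := fun n =>
    range_add_eq_image_Ici (f := a) (k := n) ▸
      ((tendsto_add_atTop_iff_nat n).2 h).isCompact_insert_range
  let C n := biUnion _ (hc n) (insert_nonempty _ _)
  refine ⟨C, fun m n hmn => ?_, fun n => ?_, ?_, fun L hL => ?_⟩
  · exact biUnion_subset_biUnion_left (insert_subset_insert (image_mono (Ici_subset_Ici.2 hmn)))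
  · exact subset_biUnion_of_mem (mem_insert_of_mem _ (mem_image_of_mem a (le_refl n)))
  · rintro _ ⟨n, rfl⟩
    exact subset_biUnion_of_mem (mem_insert K _)
  · intro x hx
    by_contra hxK
    obtain ⟨V, hV, hKV, hxV⟩ := K.2.2.2.exists_isOpen_notMem hxK
    obtain ⟨N, hN⟩ := eventually_atTop.1 (h ((isOpen_setOf_val_subset hV).mem_nhds hKV))
    have hCN : (C N).1 ⊆ V := iUnion₂_subset <| by
      rintro _ (rfl | ⟨m, hm, rfl⟩)
      exacts [hKV, hN m hm]
    exact hxV (hCN (hL ⟨N, rfl⟩ hx))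

end QNE

end

/-- If `X` is well-filtered and `Q(X)` with the upper Vietoris topology is first-countable,
then `(Q(X), ⊇)` has one-step closure. -/
theorem QNE_hasOneStepClosure_of_wellFiltered_firstCountable
    {X : Type*} [TopologicalSpace X] (hwf : WellFiltered X)
    (hfc : @FirstCountableTopology (QNE X) (upperVietoris X)) :
    HasOneStepClosure (QNE X) := by
  let _ := upperVietoris X
  intro A
  refine Subset.antisymm (fun K hK => ?_) (oneStep_subset_scottCl A)
  obtain ⟨a, haA, ha⟩ := mem_closure_iff_seq_limit.1 (closure.mono hwf.scott_le_upperVietoris hK)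
  obtain ⟨C, hCmono, hCa, hCK⟩ := QNE.exists_monotone_isLUB_of_tendsto ha
  exact ⟨range C, range_subset_iff.2 fun n => ⟨a n, haA n, hCa n⟩, range_nonempty C,
    directedOn_range.2 hCmono.directed_le, hCK⟩
end

section
/- For a poset L, the following are equivalent: (1) A' is a lower set for every subset A of L; (2) D' is a lower set for every directed subset D of L. -/
open Set

/-- `A'` is a lower set for every `A ⊆ L` iff `D'` is a lower set for every directed
`D ⊆ L`. -/
theorem lowerSet_oneStep_iff_lowerSet_oneStep_directed {L : Type*} [PartialOrder L] :
    (∀ A : Set L, IsLowerSet (oneStep A)) ↔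
      (∀ D : Set L, D.Nonempty → DirectedOn (· ≤ ·) D → IsLowerSet (oneStep D)) := by
  constructor
  · intro h D _ _
    exact h D
  · intro h A
    intro x y hyx hx
    obtain ⟨E, hEA, hEne, hEdir, hElub⟩ := hx
    have hxE : x ∈ oneStep E :=
      ⟨E, fun e he => ⟨e, he, le_refl e⟩, hEne, hEdir, hElub⟩
    have hyE : y ∈ oneStep E := h E hEne hEdir hyx hxE
    obtain ⟨D', hD'E, hD'ne, hD'dir, hD'lub⟩ := hyE
    refine ⟨D', ?_, hD'ne, hD'dir, hD'lub⟩
    intro d hd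
    obtain ⟨e, heE, hde⟩ := hD'E hd
    obtain ⟨a, haA, hea⟩ := hEA heE
    exact ⟨a, haA, hde.trans hea⟩
end

section
/- Let L be a meet continuous semilattice (every nonempty finite subset has an infimum, and inf{x, sup D} = sup_{d∈D} inf{x,d} for all x and directed D with sup D existing). Then D' is a lower set for every directed subset D of L. -/
open Set

/-- In a meet continuous semilattice (`inf{x, sup D} = sup_{d ∈ D} inf{x, d}` for directed
`D` with existing sup), `D'` is a lower set for every directed `D`. -/
theorem lowerSet_oneStep_of_meetContinuous_semilattice {L : Type*} [SemilatticeInf L]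
    (hmc : ∀ (x : L) (D : Set L), D.Nonempty → DirectedOn (· ≤ ·) D → ∀ s, IsLUB D s →
      IsLUB {y | ∃ d ∈ D, y = x ⊓ d} (x ⊓ s)) :
    ∀ D : Set L, D.Nonempty → DirectedOn (· ≤ ·) D → IsLowerSet (oneStep D) := by
  intro D _ _ x y hyx hx
  obtain ⟨E, hED, hEne, hEdir, hElub⟩ := hx
  refine ⟨{z | ∃ d ∈ E, z = y ⊓ d}, ?_, ?_, ?_, ?_⟩
  · rintro z ⟨d, hd, rfl⟩
    obtain ⟨a, ha, hda⟩ := hED hd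
    exact ⟨a, ha, le_trans inf_le_right hda⟩
  · obtain ⟨e, he⟩ := hEne
    exact ⟨y ⊓ e, e, he, rfl⟩
  · rintro _ ⟨d1, hd1, rfl⟩ _ ⟨d2, hd2, rfl⟩
    obtain ⟨d, hd, h1, h2⟩ := hEdir d1 hd1 d2 hd2
    exact ⟨y ⊓ d, ⟨d, hd, rfl⟩, inf_le_inf_left _ h1, inf_le_inf_left _ h2⟩
  · have := hmc y E hEne hEdir x hElub
    rwa [inf_eq_left.mpr hyx] at this
end

section
/- Let L be a meet continuous sup-semilattice (every nonempty finite subset has a supremum). Then D' is a lower set for every directed subset D of L. -/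
open Set

/-!
Let `y ≤ x = sup E` with `E ⊆ ↓D` directed. Meet continuity puts `y` in the Scott closure of
`↓E ∩ ↓y`, hence of the larger set `G = ↓D ∩ ↓y`, which is directed because `D` is and binary
joins exist. Principal ideals `↓u` are Scott closed, so every upper bound `u` of `G` lies
above `y`; as `y` bounds `G`, it is `sup G`, and `y ∈ D'`.
-/

section Preorder

variable {L : Type*} [Preorder L]

@[simp]
lemma dw_singleton (a : L) : dw ({a} : Set L) = Iic a := by
  ext x
  simp [dw]

lemma dw_subset_dw_of_subset_dw {A B : Set L} (h : A ⊆ dw B) : dw A ⊆ dw B := by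
  rintro x ⟨a, ha, hxa⟩
  obtain ⟨b, hb, hab⟩ := h ha
  exact ⟨b, hb, hxa.trans hab⟩

lemma scottCl_mono {A B : Set L} (h : A ⊆ B) : scottCl A ⊆ scottCl B :=
  @closure_mono L (Topology.scott L univ) A B h

lemma Set.Nonempty.of_mem_scottCl {A : Set L} {x : L} (hx : x ∈ scottCl A) : A.Nonempty := by
  let := Topology.scott L univ
  exact nonempty_iff_ne_empty.2 fun h ↦ by simp [scottCl, h] at hx

lemma scottCl_subset_Iic {A : Set L} {u : L} (hu : u ∈ upperBounds A) : scottCl A ⊆ Iic u := by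
  let := Topology.scott L univ
  have : Topology.IsScott L univ := ⟨rfl⟩
  exact closure_minimal hu isClosed_Iic

lemma isLUB_of_mem_scottCl {A : Set L} {x : L} (hx : x ∈ scottCl A) (hub : x ∈ upperBounds A) :
    IsLUB A x :=
  ⟨hub, fun _ hu ↦ scottCl_subset_Iic hu hx⟩

end Preorder

lemma DirectedOn.dw_inter_Iic {L : Type*} [SemilatticeSup L] {D : Set L}
    (hD : DirectedOn (· ≤ ·) D) (y : L) : DirectedOn (· ≤ ·) (dw D ∩ Iic y) := by
  rintro z₁ ⟨⟨d₁, hd₁, hz₁⟩, hz₁y⟩ z₂ ⟨⟨d₂, hd₂, hz₂⟩, hz₂y⟩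
  obtain ⟨d, hd, hd₁d, hd₂d⟩ := hD d₁ hd₁ d₂ hd₂
  exact ⟨z₁ ⊔ z₂, ⟨⟨d, hd, sup_le (hz₁.trans hd₁d) (hz₂.trans hd₂d)⟩, sup_le hz₁y hz₂y⟩,
    le_sup_left, le_sup_right⟩

/-- In a meet continuous sup-semilattice, `D'` is a lower set for every directed `D`. -/
theorem lowerSet_oneStep_of_meetContinuous_supSemilattice {L : Type*} [SemilatticeSup L]
    (hmc : MeetContinuous L) :
    ∀ D : Set L, D.Nonempty → DirectedOn (· ≤ ·) D → IsLowerSet (oneStep D) := by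
  intro D _ hD x y hyx ⟨E, hED, hEne, hE, hEx⟩
  have hy : y ∈ scottCl (dw D ∩ Iic y) := by
    have := hmc y E hEne hE x hEx hyx
    rw [dw_singleton] at this
    exact scottCl_mono (inter_subset_inter_left _ (dw_subset_dw_of_subset_dw hED)) this
  exact ⟨dw D ∩ Iic y, inter_subset_left, .of_mem_scottCl hy, hD.dw_inter_Iic y,
    isLUB_of_mem_scottCl hy fun _ hz ↦ hz.2⟩
end

section
/- Let L be a poset with weak one-step closure such that D' is a lower set for every directed subset D of L. Then L has one-step closure. -/
open Set

/-- If `L` has weak one-step closure and `D'` is a lower set for every directed `D`, then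
`L` has one-step closure. -/
theorem hasOneStepClosure_of_weak_and_lowerSet {L : Type*} [PartialOrder L]
    (hw : HasWeakOneStepClosure L)
    (h : ∀ D : Set L, D.Nonempty → DirectedOn (· ≤ ·) D → IsLowerSet (oneStep D)) :
    HasOneStepClosure L := by
  intro A
  rw [hw A]
  apply Set.Subset.antisymm
  · rintro x ⟨D, hDA, hne, hdir, y, hlub, hxy⟩
    -- y ∈ oneStep D via D itself
    have hyD : y ∈ oneStep D :=
      ⟨D, fun d hd => ⟨d, hd, le_refl d⟩, hne, hdir, hlub⟩
    have hxD : x ∈ oneStep D := h D hne hdir hxy hyD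
    obtain ⟨E, hED, hEne, hEdir, hElub⟩ := hxD
    refine ⟨E, ?_, hEne, hEdir, hElub⟩
    intro e he
    obtain ⟨d, hd, hed⟩ := hED he
    obtain ⟨a, ha, hda⟩ := hDA hd
    exact ⟨a, ha, hed.trans hda⟩
  · rintro x ⟨D, hDA, hne, hdir, hlub⟩
    exact ⟨D, hDA, hne, hdir, x, hlub, le_refl x⟩
end

section
/- In an exact poset L in which D' is a lower set for every directed subset D, the weakly way-below relation implies the way-below relation: x ≪_w y implies x ≪ y for all x, y ∈ L. -/
open Set

/-- In an exact poset in which `D'` is a lower set for every directed `D`, the weakly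
way-below relation implies the way-below relation. -/
theorem wayBelow_of_weaklyWayBelow {L : Type*} [PartialOrder L]
    (hex : ExactPoset L)
    (h : ∀ D : Set L, D.Nonempty → DirectedOn (· ≤ ·) D → IsLowerSet (oneStep D))
    {x y : L} (hxy : weaklyWayBelow x y) : wayBelow x y := by
  intro D hDne hDdir s hs hys
  have hsmem : s ∈ oneStep D := by
    refine ⟨D, fun d hd => ⟨d, hd, le_rfl⟩, hDne, hDdir, hs⟩
  have hymem : y ∈ oneStep D := h D hDne hDdir hys hsmem
  obtain ⟨E, hEsub, hEne, hEdir, hElub⟩ := hymem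
  obtain ⟨e, heE, a, ha, hae⟩ := hxy E hEne hEdir hElub
  obtain ⟨d, hdD, hed⟩ := hEsub heE
  exact ⟨d, hdD, a, ha, le_trans hae hed⟩
end
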